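/- arXiv:2105.08560 — 2 statements merged into one kernel-verified Lean document; each statement's English description precedes it below -/
import Mathlib

section
/- Suppose the horizon satisfies N ≥ n and assumptions (A1), (A2), (A3) hold. Then for every compact set X ⊂ ℝⁿ there exists c_l > 0 such that for every x_t ∈ X at which the tracking MPC problem is feasible, the function V is lower bounded as V(x_t) ≥ c_l‖x_t − xˢʳ_lin(x_t)‖₂². Equivalently, every feasible point of the tracking MPC problem at x_t has cost at least J*_{eq,lin}(x_t) + c_l‖x_t − xˢʳ_lin(x_t)‖₂². -/
/-!
Along any feasible trajectory the first stage cost is at least `λ_min(Q) ‖x_t − xˢ‖²`. The set of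
linearized steady-state outputs is convex, so the optimal output `yˢʳ` obeys the variational
inequality of a projection, which upgrades to the Pythagorean bound
`‖yˢ − yʳ‖²_S ≥ ‖yˢʳ − yʳ‖²_S + ‖yˢ − yˢʳ‖²_S`; by (A2) the last term dominates
`λ_min(S) σ_s² ‖xˢ − xˢʳ‖²`. The triangle inequality through `xˢ` then gives the bound.
-/
open Matrix

noncomputable section

def en {k : ℕ} (x : Fin k → ℝ) : ℝ := Real.sqrt (∑ i, x i ^ 2)

def qn {k : ℕ} (P : Matrix (Fin k) (Fin k) ℝ) (x : Fin k → ℝ) : ℝ :=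
  x ⬝ᵥ P.mulVec x

def jac {n q : ℕ} (g : (Fin n → ℝ) → Fin q → ℝ) (xt : Fin n → ℝ) :
    Matrix (Fin q) (Fin n) ℝ :=
  LinearMap.toMatrix' (fderiv ℝ g xt).toLinearMap

def fdyn {n m : ℕ} (f0 : (Fin n → ℝ) → Fin n → ℝ) (B : Matrix (Fin n) (Fin m) ℝ)
    (x : Fin n → ℝ) (u : Fin m → ℝ) : Fin n → ℝ :=
  f0 x + B.mulVec u

def hout {n p m : ℕ} (h0 : (Fin n → ℝ) → Fin p → ℝ) (D : Matrix (Fin p) (Fin m) ℝ)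
    (x : Fin n → ℝ) (u : Fin m → ℝ) : Fin p → ℝ :=
  h0 x + D.mulVec u

def flin {n m : ℕ} (f0 : (Fin n → ℝ) → Fin n → ℝ) (B : Matrix (Fin n) (Fin m) ℝ)
    (xt x : Fin n → ℝ) (u : Fin m → ℝ) : Fin n → ℝ :=
  (jac f0 xt).mulVec x + B.mulVec u + (f0 xt - (jac f0 xt).mulVec xt)

def hlin {n p m : ℕ} (h0 : (Fin n → ℝ) → Fin p → ℝ) (D : Matrix (Fin p) (Fin m) ℝ)
    (xt x : Fin n → ℝ) (u : Fin m → ℝ) : Fin p → ℝ :=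
  (jac h0 xt).mulVec x + D.mulVec u + (h0 xt - (jac h0 xt).mulVec xt)

def Zlin {n m : ℕ} (f0 : (Fin n → ℝ) → Fin n → ℝ) (B : Matrix (Fin n) (Fin m) ℝ)
    (Us : Set (Fin m → ℝ)) (xt : Fin n → ℝ) : Set ((Fin n → ℝ) × (Fin m → ℝ)) :=
  {z | z.2 ∈ Us ∧ z.1 = flin f0 B xt z.1 z.2}

def Zs {n m : ℕ} (f0 : (Fin n → ℝ) → Fin n → ℝ) (B : Matrix (Fin n) (Fin m) ℝ)
    (Us : Set (Fin m → ℝ)) : Set ((Fin n → ℝ) × (Fin m → ℝ)) :=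
  {z | z.2 ∈ Us ∧ z.1 = fdyn f0 B z.1 z.2}

def A2holds {n m p : ℕ} (f0 : (Fin n → ℝ) → Fin n → ℝ) (h0 : (Fin n → ℝ) → Fin p → ℝ)
    (B : Matrix (Fin n) (Fin m) ℝ) (D : Matrix (Fin p) (Fin m) ℝ) (σs : ℝ) : Prop :=
  ∀ (xt v : Fin n → ℝ) (w : Fin m → ℝ),
    σs * Real.sqrt (en v ^ 2 + en w ^ 2) ≤
      Real.sqrt (en ((jac f0 xt).mulVec v - v + B.mulVec w) ^ 2 +
        en ((jac h0 xt).mulVec v + D.mulVec w) ^ 2)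

def A3holds {n m : ℕ} (f0 : (Fin n → ℝ) → Fin n → ℝ) (B : Matrix (Fin n) (Fin m) ℝ)
    (μ : ℝ) : Prop :=
  ∀ (xt w : Fin n → ℝ),
    μ * en w ≤ Real.sqrt (∑ k ∈ Finset.range n, en ((jac f0 xt ^ k * B)ᵀ.mulVec w) ^ 2)

def A4holds {n : ℕ} (f0 : (Fin n → ℝ) → Fin n → ℝ) (σl : ℝ) : Prop :=
  ∀ xt v : Fin n → ℝ, σl * en v ≤ en (v - (jac f0 xt).mulVec v)
def Jeqlin {n m p : ℕ} (f0 : (Fin n → ℝ) → Fin n → ℝ) (h0 : (Fin n → ℝ) → Fin p → ℝ)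
    (B : Matrix (Fin n) (Fin m) ℝ) (D : Matrix (Fin p) (Fin m) ℝ)
    (Us : Set (Fin m → ℝ)) (S : Matrix (Fin p) (Fin p) ℝ) (yr : Fin p → ℝ)
    (xt : Fin n → ℝ) : ℝ :=
  sInf {c : ℝ | ∃ z ∈ Zlin f0 B Us xt, c = qn S (hlin h0 D xt z.1 z.2 - yr)}

def MPCfeas {n m p : ℕ} (f0 : (Fin n → ℝ) → Fin n → ℝ) (h0 : (Fin n → ℝ) → Fin p → ℝ)
    (B : Matrix (Fin n) (Fin m) ℝ) (D : Matrix (Fin p) (Fin m) ℝ)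
    (U Us : Set (Fin m → ℝ)) (N : ℕ) (xt : Fin n → ℝ)
    (xb : ℕ → Fin n → ℝ) (ub : ℕ → Fin m → ℝ)
    (xs : Fin n → ℝ) (us : Fin m → ℝ) (ys : Fin p → ℝ) : Prop :=
  (∀ k < N, xb (k + 1) = flin f0 B xt (xb k) (ub k)) ∧
  xb 0 = xt ∧ xb N = xs ∧ (∀ k < N, ub k ∈ U) ∧
  (xs, us) ∈ Zlin f0 B Us xt ∧ ys = hlin h0 D xt xs us

def MPCcost {n m p : ℕ} (Q : Matrix (Fin n) (Fin n) ℝ) (R : Matrix (Fin m) (Fin m) ℝ)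
    (S : Matrix (Fin p) (Fin p) ℝ) (yr : Fin p → ℝ) (N : ℕ)
    (xb : ℕ → Fin n → ℝ) (ub : ℕ → Fin m → ℝ)
    (xs : Fin n → ℝ) (us : Fin m → ℝ) (ys : Fin p → ℝ) : ℝ :=
  (∑ k ∈ Finset.range N, (qn Q (xb k - xs) + qn R (ub k - us))) + qn S (ys - yr)

def Jstar {n m p : ℕ} (f0 : (Fin n → ℝ) → Fin n → ℝ) (h0 : (Fin n → ℝ) → Fin p → ℝ)
    (B : Matrix (Fin n) (Fin m) ℝ) (D : Matrix (Fin p) (Fin m) ℝ)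
    (U Us : Set (Fin m → ℝ)) (Q : Matrix (Fin n) (Fin n) ℝ) (R : Matrix (Fin m) (Fin m) ℝ)
    (S : Matrix (Fin p) (Fin p) ℝ) (yr : Fin p → ℝ) (N : ℕ) (xt : Fin n → ℝ) : ℝ :=
  sInf {c : ℝ | ∃ xb ub xs us ys, MPCfeas f0 h0 B D U Us N xt xb ub xs us ys ∧
    c = MPCcost Q R S yr N xb ub xs us ys}

def Vfun {n m p : ℕ} (f0 : (Fin n → ℝ) → Fin n → ℝ) (h0 : (Fin n → ℝ) → Fin p → ℝ)
    (B : Matrix (Fin n) (Fin m) ℝ) (D : Matrix (Fin p) (Fin m) ℝ)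
    (U Us : Set (Fin m → ℝ)) (Q : Matrix (Fin n) (Fin n) ℝ) (R : Matrix (Fin m) (Fin m) ℝ)
    (S : Matrix (Fin p) (Fin p) ℝ) (yr : Fin p → ℝ) (N : ℕ) (xt : Fin n → ℝ) : ℝ :=
  Jstar f0 h0 B D U Us Q R S yr N xt - Jeqlin f0 h0 B D Us S yr xt

def MPCfeasible {n m p : ℕ} (f0 : (Fin n → ℝ) → Fin n → ℝ) (h0 : (Fin n → ℝ) → Fin p → ℝ)
    (B : Matrix (Fin n) (Fin m) ℝ) (D : Matrix (Fin p) (Fin m) ℝ)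
    (U Us : Set (Fin m → ℝ)) (N : ℕ) (xt : Fin n → ℝ) : Prop :=
  ∃ xb ub xs us ys, MPCfeas f0 h0 B D U Us N xt xb ub xs us ys

def MPCopt {n m p : ℕ} (f0 : (Fin n → ℝ) → Fin n → ℝ) (h0 : (Fin n → ℝ) → Fin p → ℝ)
    (B : Matrix (Fin n) (Fin m) ℝ) (D : Matrix (Fin p) (Fin m) ℝ)
    (U Us : Set (Fin m → ℝ)) (Q : Matrix (Fin n) (Fin n) ℝ) (R : Matrix (Fin m) (Fin m) ℝ)
    (S : Matrix (Fin p) (Fin p) ℝ) (yr : Fin p → ℝ) (N : ℕ) (xt : Fin n → ℝ)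
    (xb : ℕ → Fin n → ℝ) (ub : ℕ → Fin m → ℝ)
    (xs : Fin n → ℝ) (us : Fin m → ℝ) (ys : Fin p → ℝ) : Prop :=
  MPCfeas f0 h0 B D U Us N xt xb ub xs us ys ∧
  ∀ xb' ub' xs' us' ys', MPCfeas f0 h0 B D U Us N xt xb' ub' xs' us' ys' →
    MPCcost Q R S yr N xb ub xs us ys ≤ MPCcost Q R S yr N xb' ub' xs' us' ys'

def rollout {n m : ℕ} (f0 : (Fin n → ℝ) → Fin n → ℝ) (B : Matrix (Fin n) (Fin m) ℝ)
    (x0 : Fin n → ℝ) (u : ℕ → Fin m → ℝ) : ℕ → Fin n → ℝ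
  | 0 => x0
  | k + 1 => fdyn f0 B (rollout f0 B x0 u k) (u k)

lemma en_eq_norm {k : ℕ} (x : Fin k → ℝ) : en x = ‖WithLp.toLp 2 x‖ := by
  simp [en, EuclideanSpace.norm_eq]

lemma en_nonneg {k : ℕ} (x : Fin k → ℝ) : 0 ≤ en x := Real.sqrt_nonneg _

lemma en_add_sq_le {k : ℕ} (x y : Fin k → ℝ) :
    en (x + y) ^ 2 ≤ 2 * en x ^ 2 + 2 * en y ^ 2 := by
  have htri : en (x + y) ≤ en x + en y := by
    simpa only [en_eq_norm, WithLp.toLp_add] using norm_add_le _ _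
  nlinarith [en_nonneg (x + y), sq_nonneg (en x - en y)]

lemma qn_smul {k : ℕ} (P : Matrix (Fin k) (Fin k) ℝ) (c : ℝ) (x : Fin k → ℝ) :
    qn P (c • x) = c ^ 2 * qn P x := by
  simp only [qn, mulVec_smul, smul_dotProduct, dotProduct_smul, smul_eq_mul]
  ring

lemma qn_add {k : ℕ} {P : Matrix (Fin k) (Fin k) ℝ} (hP : P.IsHermitian) (a b : Fin k → ℝ) :
    qn P (a + b) = qn P a + 2 * (b ⬝ᵥ P *ᵥ a) + qn P b := by
  have hsymm : a ⬝ᵥ P *ᵥ b = b ⬝ᵥ P *ᵥ a := by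
    rw [dotProduct_mulVec, ← mulVec_transpose, dotProduct_comm,
      ← conjTranspose_eq_transpose_of_trivial, hP.eq]
  simp only [qn, mulVec_add, dotProduct_add, add_dotProduct, hsymm]
  ring

lemma Matrix.PosSemidef.qn_nonneg {k : ℕ} {P : Matrix (Fin k) (Fin k) ℝ} (hP : P.PosSemidef)
    (x : Fin k → ℝ) : 0 ≤ qn P x :=
  hP.dotProduct_mulVec_nonneg x

lemma continuous_qn {k : ℕ} (P : Matrix (Fin k) (Fin k) ℝ) : Continuous (qn P) :=
  continuous_id.dotProduct (continuous_const.matrix_mulVec continuous_id)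

lemma exists_pos_mul_norm_sq_le {E : Type*} [NormedAddCommGroup E] [NormedSpace ℝ E]
    [ProperSpace E] {q : E → ℝ} (hq : Continuous q) (hsmul : ∀ (c : ℝ) x, q (c • x) = c ^ 2 * q x)
    (hpos : ∀ x, x ≠ 0 → 0 < q x) : ∃ c > 0, ∀ x, c * ‖x‖ ^ 2 ≤ q x := by
  have hq0 : q 0 = 0 := by simpa using hsmul 0 0
  rcases subsingleton_or_nontrivial E with hE | hE
  · exact ⟨1, one_pos, fun x => by simp [Subsingleton.elim x 0, hq0]⟩
  obtain ⟨x₀, hx₀, hmin⟩ := (isCompact_sphere (0 : E) 1).exists_isMinOn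
    (NormedSpace.sphere_nonempty.mpr zero_le_one) hq.continuousOn
  have hx₀ne : x₀ ≠ 0 := ne_zero_of_mem_unit_sphere ⟨x₀, hx₀⟩
  refine ⟨q x₀, hpos x₀ hx₀ne, fun x => ?_⟩
  rcases eq_or_ne x 0 with rfl | hx
  · simp [hq0]
  have hunit : ‖x‖⁻¹ • x ∈ Metric.sphere (0 : E) 1 := by
    simp [norm_smul, hx]
  have hscale : q x = ‖x‖ ^ 2 * q (‖x‖⁻¹ • x) := by
    rw [hsmul, ← mul_assoc, ← mul_pow, mul_inv_cancel₀ (norm_ne_zero_iff.mpr hx), one_pow, one_mul]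
  rw [hscale, mul_comm]
  exact mul_le_mul_of_nonneg_left (hmin hunit) (sq_nonneg _)

lemma Matrix.PosDef.exists_pos_mul_en_sq_le_qn {k : ℕ} {P : Matrix (Fin k) (Fin k) ℝ}
    (hP : P.PosDef) : ∃ c > 0, ∀ x, c * en x ^ 2 ≤ qn P x := by
  obtain ⟨c, hc, hbound⟩ := exists_pos_mul_norm_sq_le (E := EuclideanSpace ℝ (Fin k))
    (q := fun v => qn P v.ofLp) ((continuous_qn P).comp (PiLp.continuous_ofLp 2 _))
    (fun c v => qn_smul P c v.ofLp)
    (fun v hv => hP.dotProduct_mulVec_pos (by simpa using hv))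
  exact ⟨c, hc, fun x => by simpa [en_eq_norm] using hbound (WithLp.toLp 2 x)⟩

lemma nonneg_of_forall_mem_Ioc_nonneg {c q : ℝ}
    (h : ∀ t ∈ Set.Ioc (0 : ℝ) 1, 0 ≤ t * c + t ^ 2 * q) : 0 ≤ c := by
  by_contra! hc
  set t := -c / (|q| + 1 - c)
  have hden : 0 < |q| + 1 - c := by linarith [abs_nonneg q]
  have ht0 : 0 < t := div_pos (neg_pos.mpr hc) hden
  have ht1 : t ≤ 1 := (div_le_one hden).mpr (by linarith [abs_nonneg q])
  have htq : t * |q| < -c := by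
    rw [div_mul_eq_mul_div, div_lt_iff₀ hden]
    nlinarith
  have := h t ⟨ht0, ht1⟩
  have hneg : 0 < t * (-c - t * |q|) := mul_pos ht0 (by linarith)
  nlinarith [mul_le_mul_of_nonneg_left (le_abs_self q) (sq_nonneg t)]

lemma qn_sub_add_qn_sub_le_of_isMinOn {k : ℕ} {S : Matrix (Fin k) (Fin k) ℝ}
    (hS : S.IsHermitian) {K : Set (Fin k → ℝ)} (hK : Convex ℝ K) {r a b : Fin k → ℝ}
    (ha : a ∈ K) (hmin : IsMinOn (fun y => qn S (y - r)) K a) (hb : b ∈ K) :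
    qn S (a - r) + qn S (b - a) ≤ qn S (b - r) := by
  have hexpand : ∀ t : ℝ, qn S (a + t • (b - a) - r) =
      qn S (a - r) + (2 * t * ((b - a) ⬝ᵥ S *ᵥ (a - r)) + t ^ 2 * qn S (b - a)) := by
    intro t
    rw [add_sub_right_comm, qn_add hS, qn_smul, smul_dotProduct, smul_eq_mul]
    ring
  -- first-order optimality along the segment from `a` to `b`
  have hgrad : 0 ≤ (b - a) ⬝ᵥ S *ᵥ (a - r) := by
    refine nonneg_of_forall_mem_Ioc_nonneg (q := qn S (b - a) / 2) fun t ht => ?_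
    have : qn S (a - r) ≤ qn S (a + t • (b - a) - r) :=
      hmin (hK.add_smul_sub_mem ha hb ⟨ht.1.le, ht.2⟩)
    linarith [hexpand t]
  have := hexpand 1
  rw [one_smul, add_sub_cancel] at this
  linarith

lemma convex_Zlin {n m : ℕ} (f0 : (Fin n → ℝ) → Fin n → ℝ) (B : Matrix (Fin n) (Fin m) ℝ)
    {Us : Set (Fin m → ℝ)} (hUs : Convex ℝ Us) (xt : Fin n → ℝ) :
    Convex ℝ (Zlin f0 B Us xt) := by
  rintro ⟨x, u⟩ ⟨hu, hx⟩ ⟨x', u'⟩ ⟨hu', hx'⟩ a b ha hb hab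
  refine ⟨hUs hu hu' ha hb hab, ?_⟩
  simp only [flin, Prod.smul_mk, Prod.mk_add_mk, mulVec_add, mulVec_smul] at hx hx' ⊢
  linear_combination (norm := module) a • hx + b • hx' + hab • (f0 xt - jac f0 xt *ᵥ xt)

lemma convex_hlin_image_Zlin {n m p : ℕ} (f0 : (Fin n → ℝ) → Fin n → ℝ)
    (h0 : (Fin n → ℝ) → Fin p → ℝ) (B : Matrix (Fin n) (Fin m) ℝ) (D : Matrix (Fin p) (Fin m) ℝ)
    {Us : Set (Fin m → ℝ)} (hUs : Convex ℝ Us) (xt : Fin n → ℝ) :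
    Convex ℝ ((fun z => hlin h0 D xt z.1 z.2) '' Zlin f0 B Us xt) := by
  rintro _ ⟨z, hz, rfl⟩ _ ⟨z', hz', rfl⟩ a b ha hb hab
  refine ⟨a • z + b • z', convex_Zlin f0 B hUs xt hz hz' ha hb hab, ?_⟩
  simp only [hlin, Prod.fst_add, Prod.snd_add, Prod.smul_fst, Prod.smul_snd, mulVec_add,
    mulVec_smul]
  linear_combination (norm := module) -(hab • (h0 xt - jac h0 xt *ᵥ xt))

section Tracking

variable {n m p : ℕ} {f0 : (Fin n → ℝ) → Fin n → ℝ} {h0 : (Fin n → ℝ) → Fin p → ℝ}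
  {B : Matrix (Fin n) (Fin m) ℝ} {D : Matrix (Fin p) (Fin m) ℝ} {U Us : Set (Fin m → ℝ)}
  {Q : Matrix (Fin n) (Fin n) ℝ} {R : Matrix (Fin m) (Fin m) ℝ} {S : Matrix (Fin p) (Fin p) ℝ}
  {yr : Fin p → ℝ} {N : ℕ} {xt : Fin n → ℝ}

lemma A2holds.mul_en_sub_le {σs : ℝ} (hA2 : A2holds f0 h0 B D σs) (hσs : 0 ≤ σs)
    {z z' : (Fin n → ℝ) × (Fin m → ℝ)} (hz : z ∈ Zlin f0 B Us xt) (hz' : z' ∈ Zlin f0 B Us xt) :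
    σs * en (z.1 - z'.1) ≤ en (hlin h0 D xt z.1 z.2 - hlin h0 D xt z'.1 z'.2) := by
  have hsteady : jac f0 xt *ᵥ (z.1 - z'.1) - (z.1 - z'.1) + B *ᵥ (z.2 - z'.2) = 0 := by
    have h := hz.2
    have h' := hz'.2
    simp only [flin] at h h'
    rw [mulVec_sub, mulVec_sub]
    linear_combination h' - h
  have houtput : jac h0 xt *ᵥ (z.1 - z'.1) + D *ᵥ (z.2 - z'.2) =
      hlin h0 D xt z.1 z.2 - hlin h0 D xt z'.1 z'.2 := by
    simp only [hlin, mulVec_sub]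
    abel
  calc σs * en (z.1 - z'.1)
      ≤ σs * √(en (z.1 - z'.1) ^ 2 + en (z.2 - z'.2) ^ 2) :=
        mul_le_mul_of_nonneg_left
          (Real.le_sqrt_of_sq_le (le_add_of_nonneg_right (sq_nonneg _))) hσs
    _ ≤ √(en (0 : Fin n → ℝ) ^ 2 + en (hlin h0 D xt z.1 z.2 - hlin h0 D xt z'.1 z'.2) ^ 2) := by
        simpa only [hsteady, houtput] using hA2 xt (z.1 - z'.1) (z.2 - z'.2)
    _ = en (hlin h0 D xt z.1 z.2 - hlin h0 D xt z'.1 z'.2) := by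
        simp [en]

lemma Jeqlin_eq_of_isMinOn {zs : (Fin n → ℝ) × (Fin m → ℝ)} (hzs : zs ∈ Zlin f0 B Us xt)
    (hmin : IsMinOn (fun z => qn S (hlin h0 D xt z.1 z.2 - yr)) (Zlin f0 B Us xt) zs) :
    Jeqlin f0 h0 B D Us S yr xt = qn S (hlin h0 D xt zs.1 zs.2 - yr) :=
  IsLeast.csInf_eq ⟨⟨zs, hzs, rfl⟩, by rintro _ ⟨z, hz, rfl⟩; exact hmin hz⟩

lemma MPCfeas.qn_sub_add_qn_sub_le_MPCcost (hQ : Q.PosSemidef) (hR : R.PosSemidef)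
    {xb : ℕ → Fin n → ℝ} {ub : ℕ → Fin m → ℝ} {xs : Fin n → ℝ} {us : Fin m → ℝ} {ys : Fin p → ℝ}
    (hfeas : MPCfeas f0 h0 B D U Us N xt xb ub xs us ys) :
    qn Q (xt - xs) + qn S (ys - yr) ≤ MPCcost Q R S yr N xb ub xs us ys := by
  obtain ⟨-, hx0, hxN, -⟩ := hfeas
  refine add_le_add_left ?_ _
  cases N with
  | zero => simp [qn, ← hx0, ← hxN]
  | succ N =>
    rw [Finset.sum_range_succ', hx0]
    have htail : 0 ≤ ∑ k ∈ Finset.range N, (qn Q (xb (k + 1) - xs) + qn R (ub (k + 1) - us)) :=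
      Finset.sum_nonneg fun _ _ => add_nonneg (hQ.qn_nonneg _) (hR.qn_nonneg _)
    linarith [hR.qn_nonneg (ub 0 - us)]

lemma qn_hlin_sub_add_mul_en_sq_le_of_isMinOn (hS : S.IsHermitian) (hUs : Convex ℝ Us)
    {σs : ℝ} (hA2 : A2holds f0 h0 B D σs) (hσs : 0 ≤ σs)
    {lS : ℝ} (hlS : 0 ≤ lS) (hSbd : ∀ y, lS * en y ^ 2 ≤ qn S y)
    {zs : (Fin n → ℝ) × (Fin m → ℝ)} (hzs : zs ∈ Zlin f0 B Us xt)
    (hmin : IsMinOn (fun z => qn S (hlin h0 D xt z.1 z.2 - yr)) (Zlin f0 B Us xt) zs)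
    {z : (Fin n → ℝ) × (Fin m → ℝ)} (hz : z ∈ Zlin f0 B Us xt) :
    qn S (hlin h0 D xt zs.1 zs.2 - yr) + lS * σs ^ 2 * en (z.1 - zs.1) ^ 2 ≤
      qn S (hlin h0 D xt z.1 z.2 - yr) := by
  set g := fun z : (Fin n → ℝ) × (Fin m → ℝ) => hlin h0 D xt z.1 z.2
  have hpyth := qn_sub_add_qn_sub_le_of_isMinOn hS (convex_hlin_image_Zlin f0 h0 B D hUs xt)
    (Set.mem_image_of_mem g hzs) (by rintro _ ⟨z', hz', rfl⟩; exact hmin hz')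
    (Set.mem_image_of_mem g hz)
  have hgap : σs * en (z.1 - zs.1) ≤ en (g z - g zs) := hA2.mul_en_sub_le hσs hz hzs
  have hgap_sq : (σs * en (z.1 - zs.1)) ^ 2 ≤ en (g z - g zs) ^ 2 :=
    pow_le_pow_left₀ (mul_nonneg hσs (en_nonneg _)) hgap 2
  nlinarith [hSbd (g z - g zs), mul_le_mul_of_nonneg_left hgap_sq hlS]

lemma MPCfeas.Jeqlin_add_mul_en_sq_le_MPCcost (hQ : Q.PosSemidef) (hR : R.PosSemidef)
    (hS : S.IsHermitian) (hUs : Convex ℝ Us) {σs : ℝ} (hA2 : A2holds f0 h0 B D σs)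
    (hσs : 0 ≤ σs) {lQ lS : ℝ} (hlQ : 0 ≤ lQ) (hlS : 0 ≤ lS)
    (hQbd : ∀ x, lQ * en x ^ 2 ≤ qn Q x) (hSbd : ∀ y, lS * en y ^ 2 ≤ qn S y)
    {zs : (Fin n → ℝ) × (Fin m → ℝ)} (hzs : zs ∈ Zlin f0 B Us xt)
    (hmin : IsMinOn (fun z => qn S (hlin h0 D xt z.1 z.2 - yr)) (Zlin f0 B Us xt) zs)
    {xb : ℕ → Fin n → ℝ} {ub : ℕ → Fin m → ℝ} {xs : Fin n → ℝ} {us : Fin m → ℝ} {ys : Fin p → ℝ}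
    (hfeas : MPCfeas f0 h0 B D U Us N xt xb ub xs us ys) :
    Jeqlin f0 h0 B D Us S yr xt + min lQ (lS * σs ^ 2) / 2 * en (xt - zs.1) ^ 2 ≤
      MPCcost Q R S yr N xb ub xs us ys := by
  have hcost := hfeas.qn_sub_add_qn_sub_le_MPCcost (S := S) (yr := yr) hQ hR
  obtain ⟨-, -, -, -, hxs, rfl⟩ := hfeas
  have hout := qn_hlin_sub_add_mul_en_sq_le_of_isMinOn hS hUs hA2 hσs hlS hSbd hzs hmin hxs
  have htri := en_add_sq_le (xt - xs) (xs - zs.1)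
  rw [sub_add_sub_cancel] at htri
  rw [Jeqlin_eq_of_isMinOn hzs hmin]
  have hmin_left := min_le_left lQ (lS * σs ^ 2)
  have hmin_right := min_le_right lQ (lS * σs ^ 2)
  nlinarith [hQbd (xt - xs), mul_le_mul_of_nonneg_right hmin_left (sq_nonneg (en (xt - xs))),
    mul_le_mul_of_nonneg_right hmin_right (sq_nonneg (en (xs - zs.1))),
    le_min hlQ (mul_nonneg hlS (sq_nonneg σs))]

lemma MPCfeasible.le_Vfun {c : ℝ} (hfeas : MPCfeasible f0 h0 B D U Us N xt)
    (hcost : ∀ xb ub xs us ys, MPCfeas f0 h0 B D U Us N xt xb ub xs us ys →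
      Jeqlin f0 h0 B D Us S yr xt + c ≤ MPCcost Q R S yr N xb ub xs us ys) :
    c ≤ Vfun f0 h0 B D U Us Q R S yr N xt := by
  obtain ⟨xb, ub, xs, us, ys, hf⟩ := hfeas
  have hJstar : Jeqlin f0 h0 B D Us S yr xt + c ≤ Jstar f0 h0 B D U Us Q R S yr N xt :=
    le_csInf ⟨_, xb, ub, xs, us, ys, hf, rfl⟩ (by
      rintro _ ⟨xb, ub, xs, us, ys, hf, rfl⟩
      exact hcost xb ub xs us ys hf)
  rw [Vfun]
  linarith

end Tracking

theorem stmt3_general {n m p : ℕ} (N : ℕ)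
    (f0 : (Fin n → ℝ) → Fin n → ℝ) (h0 : (Fin n → ℝ) → Fin p → ℝ)
    (B : Matrix (Fin n) (Fin m) ℝ) (D : Matrix (Fin p) (Fin m) ℝ)
    (U Us : Set (Fin m → ℝ)) (yr : Fin p → ℝ)
    (Q : Matrix (Fin n) (Fin n) ℝ) (R : Matrix (Fin m) (Fin m) ℝ)
    (S : Matrix (Fin p) (Fin p) ℝ)
    (hUsconv : Convex ℝ Us)
    (hQ : Q.PosDef) (hR : R.PosDef) (hS : S.PosDef)
    (σs : ℝ) (hσs : 0 < σs) (hA2 : A2holds f0 h0 B D σs)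
    -- optimal reachable steady state of the linearization at each point
    (xsrlin : (Fin n → ℝ) → Fin n → ℝ) (usrlin : (Fin n → ℝ) → Fin m → ℝ)
    (hxsrlin : ∀ xt : Fin n → ℝ, (xsrlin xt, usrlin xt) ∈ Zlin f0 B Us xt ∧
      ∀ z ∈ Zlin f0 B Us xt,
        qn S (hlin h0 D xt (xsrlin xt) (usrlin xt) - yr) ≤
          qn S (hlin h0 D xt z.1 z.2 - yr)) :
    ∀ X : Set (Fin n → ℝ), IsCompact X →
      ∃ cl : ℝ, 0 < cl ∧
        ∀ xt ∈ X, MPCfeasible f0 h0 B D U Us N xt →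
          cl * en (xt - xsrlin xt) ^ 2 ≤ Vfun f0 h0 B D U Us Q R S yr N xt ∧
          ∀ (xb : ℕ → Fin n → ℝ) (ub : ℕ → Fin m → ℝ) (xs : Fin n → ℝ)
            (us : Fin m → ℝ) (ys : Fin p → ℝ),
            MPCfeas f0 h0 B D U Us N xt xb ub xs us ys →
            Jeqlin f0 h0 B D Us S yr xt + cl * en (xt - xsrlin xt) ^ 2 ≤
              MPCcost Q R S yr N xb ub xs us ys := by
  intro X _
  obtain ⟨lQ, hlQ, hQbd⟩ := hQ.exists_pos_mul_en_sq_le_qn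
  obtain ⟨lS, hlS, hSbd⟩ := hS.exists_pos_mul_en_sq_le_qn
  have hcl : 0 < min lQ (lS * σs ^ 2) / 2 := by positivity
  have hcost : ∀ xt xb ub xs us ys, MPCfeas f0 h0 B D U Us N xt xb ub xs us ys →
      Jeqlin f0 h0 B D Us S yr xt + min lQ (lS * σs ^ 2) / 2 * en (xt - xsrlin xt) ^ 2 ≤
        MPCcost Q R S yr N xb ub xs us ys := fun xt _ _ _ _ _ hfeas =>
    hfeas.Jeqlin_add_mul_en_sq_le_MPCcost hQ.posSemidef hR.posSemidef hS.isHermitian hUsconv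
      hA2 hσs.le hlQ.le hlS.le hQbd hSbd (hxsrlin xt).1 (isMinOn_iff.mpr (hxsrlin xt).2)
  exact ⟨_, hcl, fun xt _ hfeas => ⟨hfeas.le_Vfun (hcost xt), hcost xt⟩⟩

/-- Lemma 1 (i): lower bound on the Lyapunov function candidate
`V(x_t) = J*_N(x_t) − J*_{eq,lin}(x_t)`: on every compact set `X` there is
`c_l > 0` with `V(x_t) ≥ c_l ‖x_t − xˢʳ_lin(x_t)‖₂²` for feasible `x_t ∈ X`;
equivalently, every feasible point has cost at least
`J*_{eq,lin}(x_t) + c_l ‖x_t − xˢʳ_lin(x_t)‖₂²`. -/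
theorem stmt3 {n m p : ℕ} (N : ℕ) (hN : n ≤ N)
    (f0 : (Fin n → ℝ) → Fin n → ℝ) (h0 : (Fin n → ℝ) → Fin p → ℝ)
    (B : Matrix (Fin n) (Fin m) ℝ) (D : Matrix (Fin p) (Fin m) ℝ)
    (U Us : Set (Fin m → ℝ)) (yr : Fin p → ℝ)
    (Q : Matrix (Fin n) (Fin n) ℝ) (R : Matrix (Fin m) (Fin m) ℝ)
    (S : Matrix (Fin p) (Fin p) ℝ)
    (hU : IsCompact U) (hUs : IsCompact Us) (hUsconv : Convex ℝ Us)
    (hUsint : Us ⊆ interior U)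
    (hQ : Q.PosDef) (hR : R.PosDef) (hS : S.PosDef)
    (hf0 : ContDiff ℝ 2 f0) (hh0 : ContDiff ℝ 2 h0)
    (σs : ℝ) (hσs : 0 < σs) (hA2 : A2holds f0 h0 B D σs)
    (μ : ℝ) (hμ : 0 < μ) (hA3 : A3holds f0 B μ)
    -- optimal reachable steady state of the linearization at each point
    (xsrlin : (Fin n → ℝ) → Fin n → ℝ) (usrlin : (Fin n → ℝ) → Fin m → ℝ)
    (hxsrlin : ∀ xt : Fin n → ℝ, (xsrlin xt, usrlin xt) ∈ Zlin f0 B Us xt ∧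
      ∀ z ∈ Zlin f0 B Us xt,
        qn S (hlin h0 D xt (xsrlin xt) (usrlin xt) - yr) ≤
          qn S (hlin h0 D xt z.1 z.2 - yr)) :
    ∀ X : Set (Fin n → ℝ), IsCompact X →
      ∃ cl : ℝ, 0 < cl ∧
        ∀ xt ∈ X, MPCfeasible f0 h0 B D U Us N xt →
          cl * en (xt - xsrlin xt) ^ 2 ≤ Vfun f0 h0 B D U Us Q R S yr N xt ∧
          ∀ (xb : ℕ → Fin n → ℝ) (ub : ℕ → Fin m → ℝ) (xs : Fin n → ℝ)
            (us : Fin m → ℝ) (ys : Fin p → ℝ),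
            MPCfeas f0 h0 B D U Us N xt xb ub xs us ys →
            Jeqlin f0 h0 B D Us S yr xt + cl * en (xt - xsrlin xt) ^ 2 ≤
              MPCcost Q R S yr N xb ub xs us ys :=
  stmt3_general N f0 h0 B D U Us yr Q R S hUsconv hQ hR hS σs hσs hA2 xsrlin usrlin hxsrlin
end
end

section
/- Let f₀ : ℝⁿ → ℝⁿ be continuously differentiable, X ⊆ ℝⁿ, and let c_X ≥ 0 and L_f ≥ 0 be constants such that for all z, z̃ ∈ X: ‖f₀(z) − f₀(z̃) − Df₀(z̃)(z − z̃)‖₂ ≤ c_X‖z − z̃‖₂² and ‖f₀(z) − f₀(z̃)‖₂ ≤ L_f‖z − z̃‖₂. Let B ∈ ℝ^{n×m}, x₀ ∈ X, K ∈ ℕ, and inputs u₀, …, u_{K−1} ∈ ℝᵐ. Define the true trajectory by x₀ given and x_{k+1} = f₀(x_k) + B·u_k, and the linearization-based prediction by x̄₀ = x₀ and x̄_{k+1} = f₀(x₀) + Df₀(x₀)(x̄_k − x₀) + B·u_k. If x_k ∈ X and x̄_k ∈ X for all k ≤ K, then the prediction error satisfies, for every k ≤ K: ‖x̄_k − x_k‖₂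 ≤ c_X · Σ_{j=0}^{k−1} L_f^{k−1−j}‖x̄_j − x₀‖₂². -/
/-!
Subtracting the two recursions, the inputs cancel and `x̄_{k+1} - x_{k+1}` is the Lipschitz
increment `f₀(x̄_k) - f₀(x_k)` minus the remainder of the linearization of `f₀` at `x₀`,
evaluated at `x̄_k`. Hence `e_{k+1} ≤ c_X ‖x̄_k - x₀‖² + L_f e_k` for `e_k = ‖x̄_k - x_k‖`,
and unrolling this recursion from `e₀ = 0` gives the bound.
-/

open Matrix

noncomputable section

lemma en_sub_le {k : ℕ} (x y : Fin k → ℝ) : en (x - y) ≤ en x + en y := by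
  simpa only [en_eq_norm, WithLp.toLp_sub] using norm_sub_le _ _

section Gronwall

variable {R : Type*} [Semiring R]

lemma sum_range_succ_pow_sub_mul (L : R) (a : ℕ → R) (k : ℕ) :
    ∑ j ∈ Finset.range (k + 1), L ^ (k + 1 - 1 - j) * a j =
      a k + L * ∑ j ∈ Finset.range k, L ^ (k - 1 - j) * a j := by
  rw [Finset.sum_range_succ, Nat.add_sub_cancel, Nat.sub_self, pow_zero, one_mul, add_comm,
    Finset.mul_sum]
  refine congrArg _ (Finset.sum_congr rfl fun j hj => ?_)
  have hjk : k - j = k - 1 - j + 1 := by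
    have := Finset.mem_range.mp hj
    omega
  rw [hjk, pow_succ', mul_assoc]

theorem discrete_gronwall_const [PartialOrder R] [IsOrderedRing R] {L : R} (hL : 0 ≤ L)
    {a e : ℕ → R} {K : ℕ} (h0 : e 0 ≤ 0) (hstep : ∀ k < K, e (k + 1) ≤ a k + L * e k) :
    ∀ k ≤ K, e k ≤ ∑ j ∈ Finset.range k, L ^ (k - 1 - j) * a j := by
  intro k
  induction k with
  | zero => simpa using h0
  | succ k ih =>
    intro hk
    calc e (k + 1) ≤ a k + L * e k := hstep k hk
      _ ≤ a k + L * ∑ j ∈ Finset.range k, L ^ (k - 1 - j) * a j := by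
        gcongr
        exact ih (Nat.le_of_succ_le hk)
      _ = _ := (sum_range_succ_pow_sub_mul L a k).symm

end Gronwall

theorem stmt14_general {n m : ℕ} (f0 : (Fin n → ℝ) → Fin n → ℝ)
    (X : Set (Fin n → ℝ))
    (cX Lf : ℝ) (hLf : 0 ≤ Lf)
    (hTaylor : ∀ z ∈ X, ∀ zt ∈ X,
      en (f0 z - f0 zt - (jac f0 zt).mulVec (z - zt)) ≤ cX * en (z - zt) ^ 2)
    (hLip : ∀ z ∈ X, ∀ zt ∈ X, en (f0 z - f0 zt) ≤ Lf * en (z - zt))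
    (B : Matrix (Fin n) (Fin m) ℝ) (x0 : Fin n → ℝ) (hx0 : x0 ∈ X)
    (K : ℕ) (u : ℕ → Fin m → ℝ)
    (x xb : ℕ → Fin n → ℝ)
    (hxinit : x 0 = x0) (hxbinit : xb 0 = x0)
    (hxdyn : ∀ k < K, x (k + 1) = f0 (x k) + B.mulVec (u k))
    (hxbdyn : ∀ k < K,
      xb (k + 1) = f0 x0 + (jac f0 x0).mulVec (xb k - x0) + B.mulVec (u k))
    (hxX : ∀ k ≤ K, x k ∈ X) (hxbX : ∀ k ≤ K, xb k ∈ X) :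
    ∀ k ≤ K, en (xb k - x k) ≤
      cX * ∑ j ∈ Finset.range k, Lf ^ (k - 1 - j) * en (xb j - x0) ^ 2 := by
  simp only [Finset.mul_sum, mul_left_comm cX]
  refine discrete_gronwall_const hLf (by simp [en, hxinit, hxbinit]) fun k hk => ?_
  have hsplit : xb (k + 1) - x (k + 1) =
      (f0 (xb k) - f0 (x k)) - (f0 (xb k) - f0 x0 - (jac f0 x0).mulVec (xb k - x0)) := by
    rw [hxdyn k hk, hxbdyn k hk]
    abel
  calc en (xb (k + 1) - x (k + 1))
      ≤ en (f0 (xb k) - f0 (x k)) + en (f0 (xb k) - f0 x0 - (jac f0 x0).mulVec (xb k - x0)) :=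
        hsplit ▸ en_sub_le _ _
    _ ≤ Lf * en (xb k - x k) + cX * en (xb k - x0) ^ 2 :=
        add_le_add (hLip _ (hxbX k hk.le) _ (hxX k hk.le)) (hTaylor _ (hxbX k hk.le) _ hx0)
    _ = cX * en (xb k - x0) ^ 2 + Lf * en (xb k - x k) := add_comm _ _

/-- Error bound between the true trajectory of `x⁺ = f₀(x) + Bu` and the
prediction by the dynamics linearized at the initial state `x₀`:
`‖x̄_k − x_k‖₂ ≤ c_X Σ_{j<k} L_f^{k−1−j} ‖x̄_j − x₀‖₂²`. -/
theorem stmt14 {n m : ℕ} (f0 : (Fin n → ℝ) → Fin n → ℝ)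
    (hf0 : ContDiff ℝ 1 f0) (X : Set (Fin n → ℝ))
    (cX Lf : ℝ) (hcX : 0 ≤ cX) (hLf : 0 ≤ Lf)
    (hTaylor : ∀ z ∈ X, ∀ zt ∈ X,
      en (f0 z - f0 zt - (jac f0 zt).mulVec (z - zt)) ≤ cX * en (z - zt) ^ 2)
    (hLip : ∀ z ∈ X, ∀ zt ∈ X, en (f0 z - f0 zt) ≤ Lf * en (z - zt))
    (B : Matrix (Fin n) (Fin m) ℝ) (x0 : Fin n → ℝ) (hx0 : x0 ∈ X)
    (K : ℕ) (u : ℕ → Fin m → ℝ)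
    (x xb : ℕ → Fin n → ℝ)
    (hxinit : x 0 = x0) (hxbinit : xb 0 = x0)
    (hxdyn : ∀ k < K, x (k + 1) = f0 (x k) + B.mulVec (u k))
    (hxbdyn : ∀ k < K,
      xb (k + 1) = f0 x0 + (jac f0 x0).mulVec (xb k - x0) + B.mulVec (u k))
    (hxX : ∀ k ≤ K, x k ∈ X) (hxbX : ∀ k ≤ K, xb k ∈ X) :
    ∀ k ≤ K, en (xb k - x k) ≤
      cX * ∑ j ∈ Finset.range k, Lf ^ (k - 1 - j) * en (xb j - x0) ^ 2 :=
  stmt14_general f0 X cX Lf hLf hTaylor hLip B x0 hx0 K u x xb hxinit hxbinit hxdyn hxbdyn hxX hxbX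
end
end
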